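/- Let A = ⊕_{j∈ℕ} ℤ be the group of finitely supported integer sequences and let p : A → A be the shift monomorphism p(a₁, a₂, a₃, …) = (0, a₁, a₂, a₃, …). Define the group homomorphism Φ : ∏_{n∈ℕ} A → ∏_{n∈ℕ} A by Φ((x_n)_n) = (x_n − p(x_{n+1}))_n. Then Φ is injective (so the inverse limit of the tower A ←p A ←p A ← ⋯ is trivial) and the cokernel of Φ (i.e., lim¹ of this tower) is isomorphic, as an abelian group, to (∏_{i∈ℕ} ℤ)/(⊕_{i∈ℕ} ℤ). -/

import Mathlib

/-- The subgroup `⊕_{i∈ℕ} ℤ` of `∏_{i∈ℕ} ℤ` consisting of finitely supported sequences. -/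
def finSuppSubgroup : AddSubgroup (ℕ → ℤ) where
  carrier := {x | {i | x i ≠ 0}.Finite}
  zero_mem' := by simp
  add_mem' := by
    intro a b ha hb
    apply Set.Finite.subset (ha.union hb)
    intro i hi
    by_contra h
    simp only [Set.mem_setOf_eq, not_not, Set.mem_union] at h hi
    push_neg at h
    simp [h.1, h.2] at hi
  neg_mem' := by intro a ha; simpa using ha

/-- The quotient group `(∏_{i∈ℕ} ℤ)/(⊕_{i∈ℕ} ℤ)`. -/
abbrev prodModSum : Type := (ℕ → ℤ) ⧸ finSuppSubgroup

/-- The shift monomorphism `p : ⊕_{j∈ℕ} ℤ → ⊕_{j∈ℕ} ℤ`,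
`p(a₁, a₂, a₃, …) = (0, a₁, a₂, a₃, …)`. -/
noncomputable def shiftHom : (ℕ →₀ ℤ) →+ (ℕ →₀ ℤ) :=
  Finsupp.mapDomain.addMonoidHom Nat.succ

/-- The map `Φ : ∏_n A → ∏_n A`, `Φ((x_n)_n) = (x_n − p(x_{n+1}))_n`, whose kernel is the
inverse limit and whose cokernel is `lim¹` of the tower `A ←p A ←p A ← ⋯` with `A = ⊕_{j∈ℕ} ℤ`. -/
noncomputable def towerPhi : (ℕ → (ℕ →₀ ℤ)) →+ (ℕ → (ℕ →₀ ℤ)) :=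
  AddMonoidHom.mk' (fun x n => x n - shiftHom (x (n + 1))) (by
    intro a b
    funext n
    simp only [Pi.add_apply, map_add]
    abel)

/-!
Summing `x_n(i)` along the antidiagonals `n + i = k` defines a homomorphism
`G : ∏_n A → ∏_k ℤ` with `G ∘ Φ = x ↦ x_0`, since `p` moves each entry one step along its
antidiagonal and the sum telescopes. Hence `π ∘ G : ∏_n A → (∏ ℤ)/(⊕ ℤ)` kills the image of `Φ`;
conversely, if `G x` is finitely supported, the tails `w_n = G (x_n, x_{n+1}, …)` are finitely
supported and satisfy `Φ w = x`. As `π ∘ G` is onto, it identifies the cokernel of `Φ`.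
Injectivity of `Φ` is the observation that `x_n = p x_{n+1}` forces `x_n(i) = x_{n+i}(0) = 0`.
-/

open Finset

lemma shiftHom_apply_zero (f : ℕ →₀ ℤ) : shiftHom f 0 = 0 :=
  Finsupp.mapDomain_of_notMem_range _ _ (by simp)

lemma shiftHom_apply_succ (f : ℕ →₀ ℤ) (i : ℕ) : shiftHom f (i + 1) = f i :=
  Finsupp.mapDomain_apply Nat.succ_injective f i

lemma towerPhi_apply (x : ℕ → ℕ →₀ ℤ) (n : ℕ) : towerPhi x n = x n - shiftHom (x (n + 1)) :=
  rfl

theorem towerPhi_injective : Function.Injective towerPhi := by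
  rw [injective_iff_map_eq_zero]
  intro x hx
  have hshift (n : ℕ) : x n = shiftHom (x (n + 1)) := sub_eq_zero.mp (congrFun hx n)
  suffices ∀ i n, x n i = 0 from funext fun n => Finsupp.ext fun i => this i n
  intro i
  induction i with
  | zero => intro n; rw [hshift n, shiftHom_apply_zero]
  | succ i ih => intro n; rw [hshift n, shiftHom_apply_succ, ih]

section DiagonalSum

variable {M : Type*} [AddCommMonoid M]

noncomputable def diagonalSum : (ℕ → ℕ →₀ M) →+ (ℕ → M) where
  toFun x k := ∑ p ∈ antidiagonal k, x p.1 p.2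
  map_zero' := by ext; simp
  map_add' x y := by ext; simp [sum_add_distrib]

lemma diagonalSum_apply (x : ℕ → ℕ →₀ M) (k : ℕ) :
    diagonalSum x k = ∑ p ∈ antidiagonal k, x p.1 p.2 :=
  rfl

lemma diagonalSum_zero (x : ℕ → ℕ →₀ M) : diagonalSum x 0 = x 0 0 := by
  simp [diagonalSum_apply]

lemma diagonalSum_succ (x : ℕ → ℕ →₀ M) (k : ℕ) :
    diagonalSum x (k + 1) = x 0 (k + 1) + diagonalSum (fun n => x (n + 1)) k :=
  Nat.sum_antidiagonal_succ

lemma diagonalSum_single_zero (y : ℕ → M) :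
    diagonalSum (fun n => Finsupp.single 0 (y n)) = y := by
  funext k
  rw [diagonalSum_apply, sum_eq_single_of_mem (k, 0) (by simp)]
  · simp
  · rintro ⟨n, i⟩ hp hne
    have hi : i ≠ 0 := by
      rintro rfl
      simp_all
    exact Finsupp.single_eq_of_ne hi

end DiagonalSum

lemma diagonalSum_towerPhi (x : ℕ → ℕ →₀ ℤ) : diagonalSum (towerPhi x) = x 0 := by
  funext k
  cases k with
  | zero => simp [diagonalSum_zero, towerPhi_apply, shiftHom_apply_zero]
  | succ k =>
    have hshifted : ∑ p ∈ antidiagonal (k + 1), shiftHom (x (p.1 + 1)) p.2 =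
        diagonalSum (fun n => x (n + 1)) k := by
      rw [Nat.sum_antidiagonal_succ', shiftHom_apply_zero, zero_add]
      simp only [shiftHom_apply_succ, diagonalSum_apply]
    simp only [diagonalSum_apply, towerPhi_apply, Finsupp.sub_apply, sum_sub_distrib]
    rw [hshifted, ← diagonalSum_apply, diagonalSum_succ, add_sub_cancel_right]

lemma exists_towerPhi_eq_of_finite_support (x : ℕ → ℕ →₀ ℤ)
    (hx : (Function.support (diagonalSum x)).Finite) : ∃ w, towerPhi w = x := by
  set tail : ℕ → ℕ → ℤ := fun n => diagonalSum fun m => x (n + m)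
  have htail_succ (n i : ℕ) : tail (n + 1) i = tail n (i + 1) - x n (i + 1) := by
    simp only [tail, diagonalSum_succ, add_zero, add_sub_cancel_left, Nat.add_right_comm n 1,
      add_assoc]
  have htail_finite (n : ℕ) : (Function.support (tail n)).Finite := by
    induction n with
    | zero => simpa [tail] using hx
    | succ n ih =>
      refine ((ih.union (x n).hasFiniteSupport).preimage Nat.succ_injective.injOn).subset ?_
      intro i hi
      rw [Function.mem_support, htail_succ] at hi
      by_contra h
      simp_all
  refine ⟨fun n => Finsupp.ofSupportFinite (tail n) (htail_finite n), ?_⟩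
  funext n
  ext i
  simp only [towerPhi_apply, Finsupp.sub_apply]
  cases i with
  | zero => simp [shiftHom_apply_zero, Finsupp.ofSupportFinite_coe, tail, diagonalSum_zero]
  | succ i => simp [shiftHom_apply_succ, Finsupp.ofSupportFinite_coe, htail_succ]

noncomputable def diagonalSumMod : (ℕ → ℕ →₀ ℤ) →+ prodModSum :=
  (QuotientAddGroup.mk' finSuppSubgroup).comp diagonalSum

lemma diagonalSumMod_surjective : Function.Surjective diagonalSumMod := by
  rintro ⟨y⟩
  exact ⟨fun n => Finsupp.single 0 (y n), congrArg _ (diagonalSum_single_zero y)⟩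

lemma ker_diagonalSumMod : diagonalSumMod.ker = towerPhi.range := by
  ext x
  rw [AddMonoidHom.mem_ker, diagonalSumMod, AddMonoidHom.comp_apply,
    QuotientAddGroup.mk'_apply, QuotientAddGroup.eq_zero_iff, AddMonoidHom.mem_range]
  constructor
  · exact exists_towerPhi_eq_of_finite_support x
  · rintro ⟨w, rfl⟩
    rw [diagonalSum_towerPhi]
    exact (w 0).hasFiniteSupport

/-- `Φ` is injective (the inverse limit of the shift tower vanishes) and its cokernel
(`lim¹` of the shift tower) is isomorphic to `(∏_{i∈ℕ} ℤ)/(⊕_{i∈ℕ} ℤ)`. -/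
theorem towerPhi_injective_and_cokernel :
    Function.Injective towerPhi ∧
      Nonempty (((ℕ → (ℕ →₀ ℤ)) ⧸ towerPhi.range) ≃+ prodModSum) :=
  ⟨towerPhi_injective,
    ⟨(QuotientAddGroup.quotientAddEquivOfEq ker_diagonalSumMod.symm).trans
      (QuotientAddGroup.quotientKerEquivOfSurjective _ diagonalSumMod_surjective)⟩⟩
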